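/- In the exact category C^q(Free(R)) of bounded acyclic complexes of finitely generated free modules over a ring R with a stably free non-free projective module P (with P ⊕ R^m ≅ R^n), there exists a morphism of acyclic complexes whose components are all admissible epimorphisms of Free(R), but which is not an admissible epimorphism in C^q(Free(R)): its termwise kernel is a complex of free modules that is exact as R-modules but not acyclic in Free(R). -/

import Mathlib

/-!
Let `P ⊕ Rᵐ ≅ Rⁿ` and let `K` be the exact complex `0 → Rᵐ → Rⁿ → Rⁿ → Rᵐ → 0` (degrees 3 to 0)
whose middle differential is the idempotent of `Rⁿ` with image `P`. Since `P` is not free, `K` is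
not acyclic in `Free(R)`. Adding the contractible complex `N = (Rᵐ = Rᵐ)` in degrees 2, 1 turns the
offending image into `P ⊕ Rᵐ ≅ Rⁿ`, so `M = K ⊕ N` is acyclic in `Free(R)`, and the projection
`M → N` is a termwise split epimorphism with kernel `K`. Any other complex `K'` mapping injectively
onto the termwise kernels has, degree by degree, the same images of differentials as `K` (both are
the image of the kernel under the differential of `M`), so `K'` cannot be acyclic in `Free(R)`
either.
-/

/-- A bounded complex of finitely generated free `R`-modules (presented as
`Fin (r k) → R`) is acyclic *in the exact category `Free(R)`* if its
differentials factor through short exact sequences whose factorization objects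
are again finitely generated free modules. -/
def FreeComplexAcyclic (R : Type) [Ring R] (r : ℤ → ℕ)
    (d : ∀ k : ℤ, (Fin (r k) → R) →ₗ[R] (Fin (r (k - 1)) → R)) : Prop :=
  ∃ (z : ℤ → ℕ) (ι : ∀ k : ℤ, (Fin (z k) → R) →ₗ[R] (Fin (r k) → R))
    (p : ∀ k : ℤ, (Fin (r k) → R) →ₗ[R] (Fin (z (k - 1)) → R)),
    (∀ k, Function.Injective (ι k)) ∧ (∀ k, Function.Surjective (p k)) ∧
    (∀ k, LinearMap.range (ι k) = LinearMap.ker (p k)) ∧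
    (∀ k, d k = (ι (k - 1)).comp (p k))


open LinearMap Function

section General

variable {R : Type} [Ring R]

theorem FreeComplexAcyclic.free_range {r : ℤ → ℕ}
    {d : ∀ k : ℤ, (Fin (r k) → R) →ₗ[R] (Fin (r (k - 1)) → R)} (h : FreeComplexAcyclic R r d)
    (k : ℤ) : Module.Free R (range (d k)) := by
  obtain ⟨z, ι, p, hι, hp, -, hd⟩ := h
  have : range (ι (k - 1)) = range (d k) := by
    rw [hd, range_comp_of_range_eq_top _ (range_eq_top.mpr (hp k))]
  exact .of_equiv ((LinearEquiv.ofInjective _ (hι _)).trans (.ofEq _ _ this))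

theorem FreeComplexAcyclic.of_exact {r : ℤ → ℕ}
    {d : ∀ k : ℤ, (Fin (r k) → R) →ₗ[R] (Fin (r (k - 1)) → R)}
    (hexact : ∀ k, range (d k) = ker (d (k - 1)))
    (hcycles : ∀ k, ∃ (c : ℕ) (ι : (Fin c → R) →ₗ[R] (Fin (r k) → R)),
      Injective ι ∧ range ι = ker (d k)) :
    FreeComplexAcyclic R r d := by
  choose z ι hι hker using hcycles
  have hrange (k : ℤ) : range (d k) = range (ι (k - 1)) := by rw [hexact, hker]
  let p (k : ℤ) : (Fin (r k) → R) →ₗ[R] (Fin (z (k - 1)) → R) :=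
    (LinearEquiv.ofInjective _ (hι (k - 1))).symm.toLinearMap ∘ₗ
      (d k).codRestrict _ fun x => hrange k ▸ mem_range_self (d k) x
  refine ⟨z, ι, p, hι, fun k y => ?_, fun k => ?_, fun k => ?_⟩
  · obtain ⟨x, hx⟩ : ι (k - 1) y ∈ range (d k) := hrange k ▸ mem_range_self _ y
    refine ⟨x, (LinearEquiv.symm_apply_eq _).mpr (Subtype.ext ?_)⟩
    simp [hx]
  · rw [hker, LinearEquiv.ker_comp, ker_codRestrict]
  · refine LinearMap.ext fun x => ?_
    simp [p]

noncomputable def rangeEquivMapRange {K K₁ M M₁ : Type} [AddCommGroup K] [Module R K]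
    [AddCommGroup K₁] [Module R K₁] [AddCommGroup M] [Module R M] [AddCommGroup M₁] [Module R M₁]
    {d : K →ₗ[R] K₁} {dM : M →ₗ[R] M₁} {ι : K →ₗ[R] M} {ι₁ : K₁ →ₗ[R] M₁}
    (hι₁ : Injective ι₁) (h : dM ∘ₗ ι = ι₁ ∘ₗ d) : range d ≃ₗ[R] (range ι).map dM :=
  (Submodule.equivMapOfInjective ι₁ hι₁ _).trans
    (.ofEq _ _ (by rw [← range_comp, ← range_comp, h]))

theorem free_range_of_range_eq {K K₁ K' K'₁ M M₁ : Type} [AddCommGroup K] [Module R K]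
    [AddCommGroup K₁] [Module R K₁] [AddCommGroup K'] [Module R K'] [AddCommGroup K'₁]
    [Module R K'₁] [AddCommGroup M] [Module R M] [AddCommGroup M₁] [Module R M₁]
    {d : K →ₗ[R] K₁} {d' : K' →ₗ[R] K'₁} {dM : M →ₗ[R] M₁} {ι : K →ₗ[R] M} {ι₁ : K₁ →ₗ[R] M₁}
    {ι' : K' →ₗ[R] M} {ι'₁ : K'₁ →ₗ[R] M₁} (hι₁ : Injective ι₁) (hι'₁ : Injective ι'₁)
    (h : dM ∘ₗ ι = ι₁ ∘ₗ d) (h' : dM ∘ₗ ι' = ι'₁ ∘ₗ d') (hι : range ι = range ι')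
    [Module.Free R (range d')] : Module.Free R (range d) :=
  .of_equiv (((rangeEquivMapRange hι'₁ h').trans (.ofEq _ _ (by rw [hι]))).trans
    (rangeEquivMapRange hι₁ h).symm)

theorem submodule_eq_of_eq_zero {c : ℕ} (hc : c = 0) (S T : Submodule R (Fin c → R)) : S = T := by
  subst hc; exact Subsingleton.elim S T

end General

section DirectSum

variable (R : Type) [Ring R]

noncomputable def finAddEquivProd (a b : ℕ) : (Fin (a + b) → R) ≃ₗ[R] (Fin a → R) × (Fin b → R) :=
  (LinearEquiv.funCongrLeft R R finSumFinEquiv).trans (LinearEquiv.sumArrowLequivProdArrow _ _ R R)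

variable {R} {rA rB : ℤ → ℕ} (dA : ∀ k : ℤ, (Fin (rA k) → R) →ₗ[R] (Fin (rA (k - 1)) → R))
  (dB : ∀ k : ℤ, (Fin (rB k) → R) →ₗ[R] (Fin (rB (k - 1)) → R))

noncomputable def sumDiff (k : ℤ) :
    (Fin (rA k + rB k) → R) →ₗ[R] (Fin (rA (k - 1) + rB (k - 1)) → R) :=
  (finAddEquivProd R _ _).symm.toLinearMap ∘ₗ (dA k).prodMap (dB k) ∘ₗ
    (finAddEquivProd R _ _).toLinearMap

variable (rA rB) in
noncomputable def sumInl (k : ℤ) : (Fin (rA k) → R) →ₗ[R] (Fin (rA k + rB k) → R) :=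
  (finAddEquivProd R _ _).symm.toLinearMap ∘ₗ inl R _ _

variable (rA rB) in
noncomputable def sumSnd (k : ℤ) : (Fin (rA k + rB k) → R) →ₗ[R] (Fin (rB k) → R) :=
  snd R _ _ ∘ₗ (finAddEquivProd R _ _).toLinearMap

theorem sumInl_injective (k : ℤ) : Injective (sumInl (R := R) rA rB k) :=
  (finAddEquivProd R _ _).symm.injective.comp inl_injective

theorem sumSnd_surjective (k : ℤ) : Surjective (sumSnd (R := R) rA rB k) :=
  (snd_surjective (R := R)).comp (finAddEquivProd R _ _).surjective

theorem range_sumInl (k : ℤ) : range (sumInl (R := R) rA rB k) = ker (sumSnd rA rB k) := by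
  rw [sumInl, sumSnd, range_comp, range_inl, ker_comp, Submodule.comap_equiv_eq_map_symm]

theorem sumDiff_comp_sumInl (k : ℤ) :
    sumDiff dA dB k ∘ₗ sumInl rA rB k = sumInl rA rB (k - 1) ∘ₗ dA k := by
  ext; simp [sumDiff, sumInl]

theorem sumSnd_comp_sumDiff (k : ℤ) :
    dB k ∘ₗ sumSnd rA rB k = sumSnd rA rB (k - 1) ∘ₗ sumDiff dA dB k := by
  ext; simp [sumDiff, sumSnd]

theorem range_sumDiff (k : ℤ) :
    range (sumDiff dA dB k) = ((range (dA k)).prod (range (dB k))).map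
      (finAddEquivProd R (rA (k - 1)) (rB (k - 1))).symm.toLinearMap := by
  rw [sumDiff, range_comp, LinearEquiv.range_comp, range_prodMap]

theorem ker_sumDiff (k : ℤ) :
    ker (sumDiff dA dB k) = ((ker (dA k)).prod (ker (dB k))).map
      (finAddEquivProd R (rA k) (rB k)).symm.toLinearMap := by
  rw [sumDiff, LinearEquiv.ker_comp, ker_comp, ker_prodMap, Submodule.comap_equiv_eq_map_symm]

theorem sumDiff_exact (hA : ∀ k, range (dA k) = ker (dA (k - 1)))
    (hB : ∀ k, range (dB k) = ker (dB (k - 1))) (k : ℤ) :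
    range (sumDiff dA dB k) = ker (sumDiff dA dB (k - 1)) := by
  rw [range_sumDiff, ker_sumDiff, hA, hB]

theorem exists_fin_basis_ker_sumDiff {k : ℤ} {A B : Type} [AddCommGroup A] [Module R A]
    [AddCommGroup B] [Module R B] {f : A →ₗ[R] (Fin (rA k) → R)} {g : B →ₗ[R] (Fin (rB k) → R)}
    (hf : Injective f) (hg : Injective g) (hfk : range f = ker (dA k))
    (hgk : range g = ker (dB k)) {c : ℕ} (eAB : (Fin c → R) ≃ₗ[R] A × B) :
    ∃ (c : ℕ) (ι : (Fin c → R) →ₗ[R] (Fin (rA k + rB k) → R)),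
      Injective ι ∧ range ι = ker (sumDiff dA dB k) := by
  refine ⟨c, (finAddEquivProd R _ _).symm.toLinearMap ∘ₗ f.prodMap g ∘ₗ eAB.toLinearMap,
    (finAddEquivProd R _ _).symm.injective.comp ((hf.prodMap hg).comp eAB.injective), ?_⟩
  rw [ker_sumDiff, range_comp, LinearEquiv.range_comp, range_prodMap, hfk, hgk]

end DirectSum

section StablyFree

variable {R : Type} [Ring R] {P : Type} [AddCommGroup P] [Module R P] {m n : ℕ}
  (e : (P × (Fin m → R)) ≃ₗ[R] (Fin n → R))

noncomputable def projP : (Fin n → R) →ₗ[R] P := fst R P _ ∘ₗ e.symm.toLinearMap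

noncomputable def projF : (Fin n → R) →ₗ[R] (Fin m → R) := snd R P _ ∘ₗ e.symm.toLinearMap

noncomputable def inclP : P →ₗ[R] (Fin n → R) := e.toLinearMap ∘ₗ inl R P _

noncomputable def inclF : (Fin m → R) →ₗ[R] (Fin n → R) := e.toLinearMap ∘ₗ inr R P _

theorem inclP_injective : Injective (inclP e) := e.injective.comp inl_injective

theorem inclF_injective : Injective (inclF e) := e.injective.comp inr_injective

theorem projP_surjective : Surjective (projP e) :=
  (fst_surjective (R := R)).comp e.symm.surjective

theorem projF_surjective : Surjective (projF e) :=
  (snd_surjective (R := R)).comp e.symm.surjective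

theorem ker_projF : ker (projF e) = range (inclP e) := by
  rw [projF, ker_comp, ker_snd, Submodule.comap_equiv_eq_map_symm, LinearEquiv.symm_symm,
    inclP, range_comp]

theorem ker_projP : ker (projP e) = range (inclF e) := by
  rw [projP, ker_comp, ker_fst, Submodule.comap_equiv_eq_map_symm, LinearEquiv.symm_symm,
    inclF, range_comp]

theorem range_inclP_comp_projP : range (inclP e ∘ₗ projP e) = range (inclP e) :=
  range_comp_of_range_eq_top _ (range_eq_top.mpr (projP_surjective e))

theorem ker_inclP_comp_projP : ker (inclP e ∘ₗ projP e) = range (inclF e) := by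
  rw [ker_comp, ker_eq_bot_of_injective (inclP_injective e), ← ker_projP]
  rfl

end StablyFree

section Complexes

variable {R : Type} [Ring R] {P : Type} [AddCommGroup P] [Module R P] {m n : ℕ}
  (e : (P × (Fin m → R)) ≃ₗ[R] (Fin n → R))

-- The complex `K` of the header, `Rᵐ → Rⁿ → Rⁿ → Rᵐ` in degrees 3 to 0.
def sfRank (m n : ℕ) (k : ℤ) : ℕ :=
  if k = 0 then m else if k = 1 then n else if k = 2 then n else if k = 3 then m else 0

noncomputable def sfDiff (k : ℤ) :
    (Fin (sfRank m n k) → R) →ₗ[R] (Fin (sfRank m n (k - 1)) → R) :=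
  if h : k = 1 then by subst h; exact projF e
  else if h : k = 2 then by subst h; exact inclP e ∘ₗ projP e
  else if h : k = 3 then by subst h; exact inclF e
  else 0

theorem sfRank_eq_zero {k : ℤ} (hk : k < 0 ∨ 3 < k) : sfRank m n k = 0 := by
  unfold sfRank; split_ifs <;> omega

theorem sfDiff_eq_zero {k : ℤ} (h1 : k ≠ 1) (h2 : k ≠ 2) (h3 : k ≠ 3) : sfDiff e k = 0 := by
  rw [sfDiff, dif_neg h1, dif_neg h2, dif_neg h3]

theorem sfDiff_exact (k : ℤ) : range (sfDiff e k) = ker (sfDiff e (k - 1)) := by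
  rcases (by omega : k = 1 ∨ k = 2 ∨ k = 3 ∨ k = 4 ∨ k < 1 ∨ 4 < k) with
    rfl | rfl | rfl | rfl | hk | hk
  · rw [sfDiff_eq_zero e (k := 1 - 1) (by norm_num) (by norm_num) (by norm_num), ker_zero]
    exact range_eq_top.mpr (projF_surjective e)
  · exact (range_inclP_comp_projP e).trans (ker_projF e).symm
  · exact (ker_inclP_comp_projP e).symm
  · rw [sfDiff_eq_zero e (by norm_num) (by norm_num) (by norm_num), range_zero]
    exact (ker_eq_bot_of_injective (inclF_injective e)).symm
  all_goals exact submodule_eq_of_eq_zero (sfRank_eq_zero (by omega)) _ _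

theorem free_of_free_range_sfDiff_two [Module.Free R (range (sfDiff e 2))] : Module.Free R P :=
  .of_equiv ((LinearEquiv.ofInjective _ (inclP_injective e)).trans
    (.ofEq _ (range (sfDiff e 2)) (range_inclP_comp_projP e).symm)).symm

def diskRank (m : ℕ) (k : ℤ) : ℕ := if k = 1 ∨ k = 2 then m else 0

variable (R m) in
noncomputable def diskDiff (k : ℤ) :
    (Fin (diskRank m k) → R) →ₗ[R] (Fin (diskRank m (k - 1)) → R) :=
  if h : k = 2 then by subst h; exact LinearMap.id else 0

theorem diskRank_eq_zero {k : ℤ} (hk : k ≠ 1) (hk' : k ≠ 2) : diskRank m k = 0 := by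
  simp [diskRank, hk, hk']

theorem finite_setOf_diskRank_ne_zero : {k : ℤ | diskRank m k ≠ 0}.Finite :=
  (Set.finite_Icc 1 2).subset fun k hk => by
    by_contra hk'
    rw [Set.mem_Icc] at hk'
    exact hk (diskRank_eq_zero (by omega) (by omega))

theorem finite_setOf_sfRank_add_diskRank_ne_zero :
    {k : ℤ | sfRank m n k + diskRank m k ≠ 0}.Finite :=
  (Set.finite_Icc 0 3).subset fun k hk => by
    by_contra hk'
    rw [Set.mem_Icc] at hk'
    exact hk (by rw [sfRank_eq_zero (by omega), diskRank_eq_zero (by omega) (by omega)])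

theorem diskDiff_eq_zero {k : ℤ} (hk : k ≠ 2) : diskDiff R m k = 0 := by
  rw [diskDiff, dif_neg hk]

theorem diskDiff_exact (k : ℤ) : range (diskDiff R m k) = ker (diskDiff R m (k - 1)) := by
  rcases (by omega : k = 2 ∨ k = 3 ∨ (k - 1 ≠ 1 ∧ k - 1 ≠ 2)) with rfl | rfl | ⟨hk, hk'⟩
  · rw [diskDiff_eq_zero (k := 2 - 1) (by norm_num), ker_zero]
    exact range_id
  · rw [diskDiff_eq_zero (by norm_num), range_zero]
    exact ker_id.symm
  · exact submodule_eq_of_eq_zero (diskRank_eq_zero hk hk') _ _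

theorem exists_fin_basis_ker_diskDiff (k : ℤ) :
    ∃ (c : ℕ) (ι : (Fin c → R) →ₗ[R] (Fin (diskRank m k) → R)),
      Injective ι ∧ range ι = ker (diskDiff R m k) := by
  by_cases hk : k = 1
  · subst hk
    refine ⟨m, LinearMap.id, injective_id, ?_⟩
    rw [diskDiff_eq_zero (by norm_num), ker_zero]
    exact range_id
  · refine ⟨0, 0, injective_of_subsingleton _, ?_⟩
    by_cases hk' : k = 2
    · subst hk'
      exact range_zero.trans ker_id.symm
    · exact submodule_eq_of_eq_zero (diskRank_eq_zero hk hk') _ _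

theorem exists_fin_basis_ker_sumDiff_sfDiff_diskDiff (k : ℤ) :
    ∃ (c : ℕ) (ι : (Fin c → R) →ₗ[R] (Fin (sfRank m n k + diskRank m k) → R)),
      Injective ι ∧ range ι = ker (sumDiff (sfDiff e) (diskDiff R m) k) := by
  have zero_injective (M : Type) [AddCommGroup M] [Module R M] :
      Injective (0 : (Fin 0 → R) →ₗ[R] M) := injective_of_subsingleton _
  have id_injective (M : Type) [AddCommGroup M] [Module R M] :
      Injective (LinearMap.id : M →ₗ[R] M) := injective_id
  rcases (by omega : k = 0 ∨ k = 1 ∨ k = 2 ∨ k = 3 ∨ k < 0 ∨ 3 < k) with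
    rfl | rfl | rfl | rfl | hk | hk
  · refine exists_fin_basis_ker_sumDiff _ _ (id_injective _) (zero_injective _) ?_
      (submodule_eq_of_eq_zero rfl _ _) (finAddEquivProd R m 0)
    rw [range_id, sfDiff_eq_zero e (by norm_num) (by norm_num) (by norm_num), ker_zero]
  · refine exists_fin_basis_ker_sumDiff _ _ (inclP_injective e) (id_injective _)
      (ker_projF e).symm ?_ e.symm
    rw [range_id, diskDiff_eq_zero (by norm_num), ker_zero]
  · exact exists_fin_basis_ker_sumDiff _ _ (inclF_injective e) (zero_injective _)
      (ker_inclP_comp_projP e).symm (range_zero.trans ker_id.symm) (finAddEquivProd R m 0)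
  · exact exists_fin_basis_ker_sumDiff _ _ (zero_injective _) (zero_injective _)
      (range_zero.trans (ker_eq_bot_of_injective (inclF_injective e)).symm)
      (submodule_eq_of_eq_zero rfl _ _) (finAddEquivProd R 0 0)
  all_goals
    exact exists_fin_basis_ker_sumDiff _ _ (zero_injective _) (zero_injective _)
      (submodule_eq_of_eq_zero (sfRank_eq_zero (by omega)) _ _)
      (submodule_eq_of_eq_zero (diskRank_eq_zero (by omega) (by omega)) _ _)
      (finAddEquivProd R 0 0)

end Complexes

theorem stmt5_general (R : Type) [Ring R] (P : Type) [AddCommGroup P] [Module R P]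
    (hnotfree : ¬ Module.Free R P)
    (m n : ℕ) (e : (P × (Fin m → R)) ≃ₗ[R] (Fin n → R)) :
    ∃ (rM rN : ℤ → ℕ)
      (dM : ∀ k : ℤ, (Fin (rM k) → R) →ₗ[R] (Fin (rM (k - 1)) → R))
      (dN : ∀ k : ℤ, (Fin (rN k) → R) →ₗ[R] (Fin (rN (k - 1)) → R))
      (φ : ∀ k : ℤ, (Fin (rM k) → R) →ₗ[R] (Fin (rN k) → R)),
      {k : ℤ | rM k ≠ 0}.Finite ∧ {k : ℤ | rN k ≠ 0}.Finite ∧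
      FreeComplexAcyclic R rM dM ∧ FreeComplexAcyclic R rN dN ∧
      (∀ k, (dN k).comp (φ k) = (φ (k - 1)).comp (dM k)) ∧
      (∀ k, Function.Surjective (φ k)) ∧
      ¬ (∃ (rK : ℤ → ℕ) (dK : ∀ k : ℤ, (Fin (rK k) → R) →ₗ[R] (Fin (rK (k - 1)) → R))
          (ι : ∀ k : ℤ, (Fin (rK k) → R) →ₗ[R] (Fin (rM k) → R)),
          FreeComplexAcyclic R rK dK ∧
          (∀ k, (dM k).comp (ι k) = (ι (k - 1)).comp (dK k)) ∧
          (∀ k, Function.Injective (ι k)) ∧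
          (∀ k, LinearMap.range (ι k) = LinearMap.ker (φ k))) ∧
      ∃ (rK : ℤ → ℕ) (dK : ∀ k : ℤ, (Fin (rK k) → R) →ₗ[R] (Fin (rK (k - 1)) → R))
        (ι : ∀ k : ℤ, (Fin (rK k) → R) →ₗ[R] (Fin (rM k) → R)),
        (∀ k, (dM k).comp (ι k) = (ι (k - 1)).comp (dK k)) ∧
        (∀ k, Function.Injective (ι k)) ∧
        (∀ k, LinearMap.range (ι k) = LinearMap.ker (φ k)) ∧
        (∀ k, LinearMap.range (dK k) = LinearMap.ker (dK (k - 1))) ∧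
        ¬ FreeComplexAcyclic R rK dK := by
  have hP : ¬ Module.Free R (range (sfDiff e 2)) := fun _ =>
    hnotfree (free_of_free_range_sfDiff_two e)
  refine ⟨fun k => sfRank m n k + diskRank m k, diskRank m, sumDiff (sfDiff e) (diskDiff R m),
    diskDiff R m, sumSnd _ _, finite_setOf_sfRank_add_diskRank_ne_zero,
    finite_setOf_diskRank_ne_zero,
    .of_exact (sumDiff_exact _ _ (sfDiff_exact e) diskDiff_exact)
      (exists_fin_basis_ker_sumDiff_sfDiff_diskDiff e),
    .of_exact diskDiff_exact exists_fin_basis_ker_diskDiff,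
    sumSnd_comp_sumDiff _ _, sumSnd_surjective, ?_,
    sfRank m n, sfDiff e, sumInl _ _, sumDiff_comp_sumInl _ _, sumInl_injective, range_sumInl,
    sfDiff_exact e, fun h => hP (h.free_range 2)⟩
  rintro ⟨rK, dK, ι, hK, hcomm, hι, hker⟩
  have := hK.free_range 2
  exact hP (free_range_of_range_eq (sumInl_injective _) (hι _) (sumDiff_comp_sumInl _ _ 2)
    (hcomm 2) ((range_sumInl 2).trans (hker 2).symm))

/-- **Example 1.3 of Harris.** Over a ring `R` with a finitely generated stably
free non-free projective module `P` (with `P ⊕ Rᵐ ≅ Rⁿ`), there is a morphism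
of bounded acyclic complexes in `Cᑫ(Free(R))` whose components are all
admissible epimorphisms of `Free(R)`, but which is not an admissible
epimorphism in `Cᑫ(Free(R))`: its termwise kernel is a complex of finitely
generated free modules that is exact as a sequence of `R`-modules but is not
acyclic in `Free(R)`. -/
theorem stmt5 (R : Type) [Ring R] (P : Type) [AddCommGroup P] [Module R P]
    [Module.Finite R P] [Module.Projective R P] (hnotfree : ¬ Module.Free R P)
    (m n : ℕ) (e : (P × (Fin m → R)) ≃ₗ[R] (Fin n → R)) :
    ∃ (rM rN : ℤ → ℕ)
      (dM : ∀ k : ℤ, (Fin (rM k) → R) →ₗ[R] (Fin (rM (k - 1)) → R))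
      (dN : ∀ k : ℤ, (Fin (rN k) → R) →ₗ[R] (Fin (rN (k - 1)) → R))
      (φ : ∀ k : ℤ, (Fin (rM k) → R) →ₗ[R] (Fin (rN k) → R)),
      {k : ℤ | rM k ≠ 0}.Finite ∧ {k : ℤ | rN k ≠ 0}.Finite ∧
      FreeComplexAcyclic R rM dM ∧ FreeComplexAcyclic R rN dN ∧
      (∀ k, (dN k).comp (φ k) = (φ (k - 1)).comp (dM k)) ∧
      (∀ k, Function.Surjective (φ k)) ∧
      ¬ (∃ (rK : ℤ → ℕ) (dK : ∀ k : ℤ, (Fin (rK k) → R) →ₗ[R] (Fin (rK (k - 1)) → R))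
          (ι : ∀ k : ℤ, (Fin (rK k) → R) →ₗ[R] (Fin (rM k) → R)),
          FreeComplexAcyclic R rK dK ∧
          (∀ k, (dM k).comp (ι k) = (ι (k - 1)).comp (dK k)) ∧
          (∀ k, Function.Injective (ι k)) ∧
          (∀ k, LinearMap.range (ι k) = LinearMap.ker (φ k))) ∧
      ∃ (rK : ℤ → ℕ) (dK : ∀ k : ℤ, (Fin (rK k) → R) →ₗ[R] (Fin (rK (k - 1)) → R))
        (ι : ∀ k : ℤ, (Fin (rK k) → R) →ₗ[R] (Fin (rM k) → R)),
        (∀ k, (dM k).comp (ι k) = (ι (k - 1)).comp (dK k)) ∧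
        (∀ k, Function.Injective (ι k)) ∧
        (∀ k, LinearMap.range (ι k) = LinearMap.ker (φ k)) ∧
        (∀ k, LinearMap.range (dK k) = LinearMap.ker (dK (k - 1))) ∧
        ¬ FreeComplexAcyclic R rK dK :=
  stmt5_general R P hnotfree m n e
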